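/- For every integer n ≥ 2 and J ∈ [0,1], the quantity ∑_{k=1}^{n} |g_k¹|²/ω_k² with g_k¹ = sin(kπ/(n+1))/sqrt(2(n+1) sin(kπ/(2(n+1)))) and ω_k = 2 sin(kπ/(2(n+1))) satisfies (1/π) ln n − 1/3 ≤ ∑_{k=1}^{n} |g_k¹|²/ω_k² ≤ (1/2) ln n + 1/4. -/

import Mathlib

/-!
Put `θ_k = kπ/(2(n+1))`. The double-angle formula turns the `k`-th term into
`cos² θ_k / (2(n+1) sin θ_k) = (1/sin θ_k - sin θ_k) / (2(n+1))`, and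
`θ cos θ < sin θ ≤ θ` on `(0, π/2)` squeezes it between `1/(kπ) - θ_k/(2(n+1))` and `1/(kπ)`.
Summing, `H_n/π - πn/(8(n+1)) ≤ S ≤ H_n/π`; the harmonic bounds `1/2 < γ < H_n - log n`
and `H_n ≤ 1 + log n` then give the two estimates.
-/

open Real Finset

lemma cos_sq_div_sin_le_inv {θ : ℝ} (h0 : 0 < θ) (h1 : θ < π / 2) :
    cos θ ^ 2 / sin θ ≤ θ⁻¹ := by
  have hs : 0 < sin θ := sin_pos_of_pos_of_lt_pi h0 (by linarith [pi_pos])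
  have hc : 0 < cos θ := cos_pos_of_mem_Ioo ⟨by linarith, h1⟩
  have htan : θ * cos θ < sin θ := by
    simpa [tan_eq_sin_div_cos, lt_div_iff₀ hc] using lt_tan h0 h1
  rw [div_le_iff₀ hs, ← div_eq_inv_mul, le_div_iff₀ h0]
  nlinarith [cos_le_one θ]

lemma inv_sub_le_cos_sq_div_sin {θ : ℝ} (h0 : 0 < θ) (h1 : θ < π) :
    θ⁻¹ - θ ≤ cos θ ^ 2 / sin θ := by
  have hs : 0 < sin θ := sin_pos_of_pos_of_lt_pi h0 h1
  calc θ⁻¹ - θ ≤ (sin θ)⁻¹ - sin θ :=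
        sub_le_sub (inv_anti₀ hs (sin_le h0.le)) (sin_le h0.le)
    _ = cos θ ^ 2 / sin θ := by rw [cos_sq']; field_simp

lemma sin_two_mul_sq_div (c θ : ℝ) (hs : sin θ ≠ 0) :
    sin (2 * θ) ^ 2 / (c * sin θ) / (2 * sin θ) ^ 2 = cos θ ^ 2 / sin θ / c := by
  rw [sin_two_mul]
  field_simp

lemma sum_Icc_natCast (n : ℕ) : ∑ k ∈ Icc 1 n, ((k : ℕ) : ℝ) = n * (n + 1) / 2 := by
  induction n with
  | zero => simp
  | succ n ih => rw [sum_Icc_succ_top (by omega), ih]; push_cast; ring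

lemma one_half_lt_harmonic_sub_log {n : ℕ} (hn : n ≠ 0) : 1 / 2 < harmonic n - log n := by
  have h := one_half_lt_eulerMascheroniConstant.trans
    (eulerMascheroniConstant_lt_eulerMascheroniSeq' n)
  rwa [eulerMascheroniSeq', if_neg hn] at h

lemma angle_mem_Ioo {n k : ℕ} (hk : k ∈ Icc 1 n) :
    (k : ℝ) * π / (2 * (n + 1)) ∈ Set.Ioo 0 (π / 2) := by
  obtain ⟨hk1, hkn⟩ := mem_Icc.mp hk
  have hk1' : (1 : ℝ) ≤ k := by exact_mod_cast hk1
  have hkn' : (k : ℝ) < n + 1 := by exact_mod_cast Nat.lt_succ_of_le hkn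
  refine ⟨by positivity, ?_⟩
  rw [div_lt_iff₀ (by positivity)]
  nlinarith [pi_pos]

lemma sum_inv_angle_div (n : ℕ) :
    ∑ k ∈ Icc 1 n, ((k : ℝ) * π / (2 * (n + 1)))⁻¹ / (2 * (n + 1)) = harmonic n / π := by
  rw [harmonic_eq_sum_Icc]
  push_cast
  rw [sum_div]
  refine sum_congr rfl fun k hk => ?_
  have : (k : ℝ) ≠ 0 := by have := (mem_Icc.mp hk).1; positivity
  field_simp

lemma sum_angle_div (n : ℕ) :
    ∑ k ∈ Icc 1 n, (k : ℝ) * π / (2 * (n + 1)) / (2 * (n + 1)) = π * n / (8 * (n + 1)) := by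
  rw [← sum_div, ← sum_div, ← sum_mul, sum_Icc_natCast]
  field_simp
  ring

lemma overlap_sum_eq (n : ℕ) :
    (∑ k ∈ Icc 1 n,
        (sin (k * π / (n + 1)) ^ 2 / (2 * ((n : ℝ) + 1) * sin (k * π / (2 * (n + 1))))) /
          (2 * sin (k * π / (2 * (n + 1)))) ^ 2) =
      ∑ k ∈ Icc 1 n, cos (k * π / (2 * (n + 1))) ^ 2 / sin (k * π / (2 * (n + 1))) /
        (2 * (n + 1)) := by
  refine sum_congr rfl fun k hk => ?_
  obtain ⟨h0, h1⟩ := angle_mem_Ioo hk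
  rw [← sin_two_mul_sq_div _ _ (sin_pos_of_pos_of_lt_pi h0 (by linarith)).ne']
  congr 3
  field_simp

lemma sum_cos_sq_div_sin_le_harmonic (n : ℕ) :
    ∑ k ∈ Icc 1 n, cos (k * π / (2 * (n + 1))) ^ 2 / sin (k * π / (2 * (n + 1))) /
      (2 * ((n : ℝ) + 1)) ≤ harmonic n / π := by
  rw [← sum_inv_angle_div]
  gcongr with k hk
  exact cos_sq_div_sin_le_inv (angle_mem_Ioo hk).1 (angle_mem_Ioo hk).2

lemma harmonic_sub_le_sum_cos_sq_div_sin (n : ℕ) :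
    harmonic n / π - π * n / (8 * (n + 1)) ≤
      ∑ k ∈ Icc 1 n, cos (k * π / (2 * (n + 1))) ^ 2 / sin (k * π / (2 * (n + 1))) /
        (2 * ((n : ℝ) + 1)) := by
  rw [← sum_inv_angle_div, ← sum_angle_div, ← sum_sub_distrib]
  gcongr with k hk
  rw [← sub_div]
  gcongr
  obtain ⟨h0, h1⟩ := angle_mem_Ioo hk
  exact inv_sub_le_cos_sq_div_sin h0 (by linarith)

lemma pi_div_eight_le : π / 8 ≤ 1 / 2 / π + 1 / 3 := by
  have hπ := pi_pos
  rw [div_add_div _ _ (by positivity) (by norm_num), le_div_iff₀ (by positivity)]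
  nlinarith [pi_lt_d2]

lemma one_add_div_pi_le {L : ℝ} (hL : log 2 ≤ L) : (1 + L) / π ≤ L / 2 + 1 / 4 := by
  rw [div_le_iff₀ pi_pos]
  nlinarith [pi_gt_d2, log_two_gt_d9]

/-- Bounds on the overlap sum of the transmission line:
`(1/π) ln n − 1/3 ≤ ∑_{k=1}^{n} |g_k¹|²/ω_k² ≤ (1/2) ln n + 1/4`, where
`g_k¹ = sin(kπ/(n+1))/√(2(n+1) sin(kπ/(2(n+1))))` and `ω_k = 2 sin(kπ/(2(n+1)))`. -/
theorem overlap_sum_bounds (n : ℕ) (hn : 2 ≤ n) :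
    (1 / Real.pi) * Real.log n - 1 / 3 ≤
      (∑ k ∈ Finset.Icc 1 n,
        (Real.sin (k * Real.pi / (n + 1)) ^ 2 /
            (2 * ((n : ℝ) + 1) * Real.sin (k * Real.pi / (2 * (n + 1))))) /
          (2 * Real.sin (k * Real.pi / (2 * (n + 1)))) ^ 2) ∧
    (∑ k ∈ Finset.Icc 1 n,
        (Real.sin (k * Real.pi / (n + 1)) ^ 2 /
            (2 * ((n : ℝ) + 1) * Real.sin (k * Real.pi / (2 * (n + 1))))) /
          (2 * Real.sin (k * Real.pi / (2 * (n + 1)))) ^ 2) ≤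
      (1 / 2) * Real.log n + 1 / 4 := by
  rw [overlap_sum_eq]
  have hγ : 1 / 2 < harmonic n - log n := one_half_lt_harmonic_sub_log (by omega)
  have hπn : π * n / (8 * (n + 1)) ≤ π / 8 := by
    rw [div_le_div_iff₀ (by positivity) (by norm_num)]
    nlinarith [pi_pos]
  constructor
  · calc 1 / π * log n - 1 / 3 = harmonic n / π - (harmonic n - log n) / π - 1 / 3 := by ring
      _ ≤ harmonic n / π - 1 / 2 / π - 1 / 3 := by gcongr
      _ ≤ harmonic n / π - π * n / (8 * (n + 1)) := by linarith [pi_div_eight_le]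
      _ ≤ _ := harmonic_sub_le_sum_cos_sq_div_sin n
  · calc _ ≤ harmonic n / π := sum_cos_sq_div_sin_le_harmonic n
      _ ≤ (1 + log n) / π := by gcongr; exact harmonic_le_one_add_log n
      _ ≤ 1 / 2 * log n + 1 / 4 := by
          rw [one_div_mul_eq_div]
          exact one_add_div_pi_le (log_le_log (by norm_num) (by exact_mod_cast hn))
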